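/- arXiv:1006.1146 — 4 statements merged into one kernel-verified Lean document; each statement's English description precedes it below -/
import Mathlib

section
/- Let X and Y be real random variables and M > 0 a constant such that E[X] = E[Y] = 0, E[X^{2d}] ≤ d! M^d and E[Y^{2d}] ≤ d! M^d for every positive integer d, and set σ = E[XY]. Then for every positive integer m, E[|XY − σ|^m] ≤ m! (2M)^m. -/
open MeasureTheory

/-- Moment bound for Bernstein's inequality: if `E X = E Y = 0`,
`E X^{2d} ≤ d! M^d` and `E Y^{2d} ≤ d! M^d` for all positive integers `d`,
and `σ = E[XY]`, then `E |XY − σ|^m ≤ m! (2M)^m` for every positive integer `m`.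
All appearing moments are assumed integrable. -/
theorem moment_bound_for_bernstein
    {Ω : Type*} [MeasurableSpace Ω] (μ : Measure Ω) [IsProbabilityMeasure μ]
    (X Y : Ω → ℝ) (M : ℝ) (hM : 0 < M)
    (hXmeas : Measurable X) (hYmeas : Measurable Y)
    (hXint : ∀ d : ℕ, 0 < d → Integrable (fun ω => (X ω) ^ (2 * d)) μ)
    (hYint : ∀ d : ℕ, 0 < d → Integrable (fun ω => (Y ω) ^ (2 * d)) μ)
    (hXYint : Integrable (fun ω => X ω * Y ω) μ)
    (hX0 : ∫ ω, X ω ∂μ = 0) (hY0 : ∫ ω, Y ω ∂μ = 0)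
    (hXmom : ∀ d : ℕ, 0 < d → ∫ ω, (X ω) ^ (2 * d) ∂μ ≤ d.factorial * M ^ d)
    (hYmom : ∀ d : ℕ, 0 < d → ∫ ω, (Y ω) ^ (2 * d) ∂μ ≤ d.factorial * M ^ d)
    (σ : ℝ) (hσ : σ = ∫ ω, X ω * Y ω ∂μ)
    (habsint : ∀ m : ℕ, 0 < m → Integrable (fun ω => |X ω * Y ω - σ| ^ m) μ) :
    ∀ m : ℕ, 0 < m →
      ∫ ω, |X ω * Y ω - σ| ^ m ∂μ ≤ m.factorial * (2 * M) ^ m := by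
  -- pointwise AM-GM bound : |XY|^m ≤ (X^{2m} + Y^{2m}) / 2
  have key : ∀ m : ℕ, ∀ ω, |X ω * Y ω| ^ m ≤ ((X ω) ^ (2 * m) + (Y ω) ^ (2 * m)) / 2 := by
    intro m ω
    have h1 : |X ω * Y ω| ^ m = |X ω| ^ m * |Y ω| ^ m := by
      rw [abs_mul, mul_pow]
    have h2 : (X ω) ^ (2 * m) = (|X ω| ^ m) ^ 2 := by
      rw [← abs_pow, sq_abs, ← pow_mul, mul_comm 2 m]
    have h3 : (Y ω) ^ (2 * m) = (|Y ω| ^ m) ^ 2 := by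
      rw [← abs_pow, sq_abs, ← pow_mul, mul_comm 2 m]
    rw [h1, h2, h3]
    nlinarith [sq_nonneg (|X ω| ^ m - |Y ω| ^ m)]
  -- integrability of |XY|^m
  have habsXYint : ∀ m : ℕ, 0 < m → Integrable (fun ω => |X ω * Y ω| ^ m) μ := by
    intro m hm
    have hbound := ((hXint m hm).add (hYint m hm)).div_const 2
    refine hbound.mono' ?_ ?_
    · exact (((hXmeas.mul hYmeas).abs.pow_const m)).aestronglyMeasurable
    · filter_upwards with ω
      simp only [Pi.add_apply, Real.norm_eq_abs, abs_pow, abs_abs]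
      exact key m ω
  -- E|XY|^m ≤ m! M^m
  have hEabs : ∀ m : ℕ, 0 < m → ∫ ω, |X ω * Y ω| ^ m ∂μ ≤ m.factorial * M ^ m := by
    intro m hm
    have h1 : ∫ ω, |X ω * Y ω| ^ m ∂μ ≤
        ∫ ω, ((X ω) ^ (2 * m) + (Y ω) ^ (2 * m)) / 2 ∂μ :=
      integral_mono (habsXYint m hm) (((hXint m hm).add (hYint m hm)).div_const 2)
        (fun ω => key m ω)
    have h2 : ∫ ω, ((X ω) ^ (2 * m) + (Y ω) ^ (2 * m)) / 2 ∂μ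
        = ((∫ ω, (X ω) ^ (2 * m) ∂μ) + ∫ ω, (Y ω) ^ (2 * m) ∂μ) / 2 := by
      rw [integral_div, integral_add (hXint m hm) (hYint m hm)]
    have := hXmom m hm
    have := hYmom m hm
    linarith
  -- |σ| ≤ M
  have hσM : |σ| ≤ M := by
    have h1 : |σ| ≤ ∫ ω, |X ω * Y ω| ∂μ := by
      rw [hσ, ← Real.norm_eq_abs]
      exact (norm_integral_le_integral_norm _).trans (le_of_eq (by simp [Real.norm_eq_abs, abs_mul]))
    have h2 : ∫ ω, |X ω * Y ω| ∂μ ≤ (1 : ℕ).factorial * M ^ 1 := by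
      have := hEabs 1 one_pos
      simpa using this
    simpa using h1.trans h2
  intro m hm
  -- pointwise bound: |XY - σ|^m ≤ 2^{m-1} (|XY|^m + M^m)
  have hpt : ∀ ω, |X ω * Y ω - σ| ^ m ≤ 2 ^ (m - 1) * (|X ω * Y ω| ^ m + M ^ m) := by
    intro ω
    have h1 : |X ω * Y ω - σ| ≤ |X ω * Y ω| + |σ| := abs_sub (X ω * Y ω) σ
    have h2 : |X ω * Y ω - σ| ^ m ≤ (|X ω * Y ω| + |σ|) ^ m :=
      pow_le_pow_left₀ (abs_nonneg _) h1 m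
    have h3 : (|X ω * Y ω| + |σ|) ^ m ≤ 2 ^ (m - 1) * (|X ω * Y ω| ^ m + |σ| ^ m) :=
      add_pow_le (abs_nonneg _) (abs_nonneg _) m
    have h4 : |σ| ^ m ≤ M ^ m := pow_le_pow_left₀ (abs_nonneg _) hσM m
    have h5 : (0:ℝ) ≤ 2 ^ (m - 1) := by positivity
    nlinarith [abs_nonneg (X ω * Y ω), pow_nonneg (abs_nonneg (X ω * Y ω)) m]
  have hint2 : Integrable (fun ω => 2 ^ (m - 1) * (|X ω * Y ω| ^ m + M ^ m)) μ :=
    (((habsXYint m hm).add (integrable_const _)).const_mul _)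
  have hle : ∫ ω, |X ω * Y ω - σ| ^ m ∂μ ≤
      ∫ ω, 2 ^ (m - 1) * (|X ω * Y ω| ^ m + M ^ m) ∂μ :=
    integral_mono (habsint m hm) hint2 hpt
  have heq : ∫ ω, 2 ^ (m - 1) * (|X ω * Y ω| ^ m + M ^ m) ∂μ
      = 2 ^ (m - 1) * ((∫ ω, |X ω * Y ω| ^ m ∂μ) + M ^ m) := by
    rw [integral_const_mul, integral_add (habsXYint m hm) (integrable_const _),
      integral_const]
    simp
  have hE := hEabs m hm
  have hMm : (0:ℝ) < M ^ m := pow_pos hM m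
  have hfact : (1:ℝ) ≤ m.factorial := by exact_mod_cast m.factorial_pos
  have h2pow : (2:ℝ) ^ (m - 1) * 2 = 2 ^ m := by
    rw [← pow_succ]
    congr 1
    omega
  calc ∫ ω, |X ω * Y ω - σ| ^ m ∂μ
      ≤ 2 ^ (m - 1) * ((∫ ω, |X ω * Y ω| ^ m ∂μ) + M ^ m) := by rw [← heq]; exact hle
    _ ≤ 2 ^ (m - 1) * (m.factorial * M ^ m + m.factorial * M ^ m) := by
        have : (0:ℝ) ≤ 2 ^ (m - 1) := by positivity
        have hMle : M ^ m ≤ m.factorial * M ^ m := le_mul_of_one_le_left hMm.le hfact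
        nlinarith
    _ = 2 ^ (m - 1) * 2 * (m.factorial * M ^ m) := by ring
    _ = 2 ^ m * (m.factorial * M ^ m) := by rw [h2pow]
    _ = m.factorial * (2 * M) ^ m := by rw [mul_pow]; ring
end

section
/- Let X be a fixed n×p real matrix with columns X_1,…,X_p, let ε ∈ R^n, let β* ∈ R^p with support S = {j : β*_j ≠ 0} of cardinality s ≥ 1 and complement C, and let y = Xβ* + ε. Let Σ̂ = XᵀX/n, let Σ̂^ν be a symmetric p×p matrix with |Σ̂^ν_ij − Σ̂_ij| ≤ ν for all i, j (ν ≥ 0), and let λ > 0. Write ρ̄ = max_{j∈S}|β*_j| and ρ_ = min_{j∈S}|β*_j|. Suppose: (i) the S×S submatrix Σ̂^ν_SS is positive definite; (ii) ‖Σ̂^ν_CS (Σ̂^ν_SS)^{-1}‖_∞ · ( ‖X_Sᵀε/n‖_∞ + s ν ρ̄ + λ ) + s ν ρ̄ + ‖X_Cᵀε/n‖_∞ ≤ λ; (iii) ‖(Σ̂^ν_SS)^{-1}‖_∞ · ( ‖X_Sᵀε/n‖_∞ + s ν ρ̄ + λ ) < ρ_. Then the vector β̂ ∈ R^p defined by β̂_C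 = 0 and β̂_S = β*_S + (Σ̂^ν_SS)^{-1} ( X_Sᵀε/n − λ·sgn(β*_S) − (Σ̂^ν_SS − Σ̂_SS) β*_S ) satisfies sgn(β̂) = sgn(β*), and there exists ẑ ∈ R^p with ẑ_S = sgn(β*_S), ‖ẑ_C‖_∞ ≤ 1, and Σ̂^ν β̂ − Xᵀy/n + λ ẑ = 0. -/
open Matrix

/-- Matrix infinity norm `‖A‖_∞ = max_i Σ_j |A i j|`. -/
noncomputable def matInfNorm {m q : Type*} [Fintype q] (A : Matrix m q ℝ) : ℝ :=
  ⨆ i, ∑ j, |A i j|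

/-- Vector infinity norm `‖v‖_∞ = max_j |v j|`. -/
noncomputable def vecInfNorm {m : Type*} (v : m → ℝ) : ℝ := ⨆ i, |v i|

lemma vecInfNorm_nonneg' {m : Type*} (v : m → ℝ) : 0 ≤ vecInfNorm v :=
  Real.iSup_nonneg fun _ => abs_nonneg _

lemma abs_le_vecInfNorm' {m : Type*} [Finite m] (v : m → ℝ) (i : m) :
    |v i| ≤ vecInfNorm v :=
  le_ciSup (f := fun i => |v i|) (Set.Finite.bddAbove (Set.finite_range _)) i

lemma matInfNorm_nonneg' {m q : Type*} [Fintype q] (A : Matrix m q ℝ) :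
    0 ≤ matInfNorm A := Real.iSup_nonneg fun _ => Finset.sum_nonneg fun _ _ => abs_nonneg _

lemma abs_mulVec_le' {m q : Type*} [Finite m] [Fintype q] (A : Matrix m q ℝ)
    (w : q → ℝ) (i : m) : |(A.mulVec w) i| ≤ matInfNorm A * vecInfNorm w := by
  calc |(A.mulVec w) i| ≤ ∑ j, |A i j * w j| := by
        simpa [Matrix.mulVec, dotProduct] using
          Finset.abs_sum_le_sum_abs (fun j => A i j * w j) Finset.univ
    _ ≤ ∑ j, |A i j| * vecInfNorm w := Finset.sum_le_sum fun j _ => by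
        rw [abs_mul]
        exact mul_le_mul_of_nonneg_left (abs_le_vecInfNorm' w j) (abs_nonneg _)
    _ = (∑ j, |A i j|) * vecInfNorm w := (Finset.sum_mul ..).symm
    _ ≤ matInfNorm A * vecInfNorm w :=
        mul_le_mul_of_nonneg_right
          (le_ciSup (f := fun i => ∑ j, |A i j|) (Set.Finite.bddAbove (Set.finite_range _)) i)
          (vecInfNorm_nonneg' w)

lemma sign_eq_of_abs_lt' {a b : ℝ} (h : |b - a| < |a|) : Real.sign b = Real.sign a := by
  rcases lt_trichotomy a 0 with ha | ha | ha
  · have hb : b < 0 := by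
      have := abs_lt.mp h
      rw [abs_of_neg ha] at this; linarith [this.2]
    rw [Real.sign_of_neg ha, Real.sign_of_neg hb]
  · subst ha; simp at h; linarith [abs_nonneg b, h]
  · have hb : 0 < b := by
      have := abs_lt.mp h
      rw [abs_of_pos ha] at this; linarith [this.1]
    rw [Real.sign_of_pos ha, Real.sign_of_pos hb]

lemma abs_sign_le' (x : ℝ) : |Real.sign x| ≤ 1 := by
  rcases lt_trichotomy x 0 with h|h|h
  · simp [Real.sign_of_neg h]
  · simp [h]
  · simp [Real.sign_of_pos h]

/-- Fixed-design sign recovery (KKT) lemma for the covariance-thresholded lasso.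
Under positive definiteness of `Σ̂^ν_SS` and the two infinity-norm conditions,
the explicitly defined primal candidate `β̂` (zero off `S`, and on `S` equal to
`β*_S + (Σ̂^ν_SS)⁻¹(X_Sᵀε/n − λ·sgn(β*_S) − (Σ̂^ν_SS − Σ̂_SS)β*_S)`) recovers the
signs of `β*` and satisfies, together with some subgradient vector `ẑ`, the KKT
stationarity equation `Σ̂^ν β̂ − Xᵀy/n + λẑ = 0`. -/
theorem ctLasso_fixed_design_sign_recovery {n p : ℕ} (hn : 0 < n)
    (X : Matrix (Fin n) (Fin p) ℝ) (ε : Fin n → ℝ) (βstar : Fin p → ℝ)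
    (S : Finset (Fin p)) (hS : ∀ j, j ∈ S ↔ βstar j ≠ 0) (hScard : 1 ≤ S.card)
    (y : Fin n → ℝ) (hy : y = X.mulVec βstar + ε)
    (sigHat : Matrix (Fin p) (Fin p) ℝ) (hSigHat : sigHat = (n : ℝ)⁻¹ • (Xᵀ * X))
    (sigNu : Matrix (Fin p) (Fin p) ℝ) (hsigNusym : sigNu.IsSymm)
    (ν : ℝ) (hν : 0 ≤ ν) (hclose : ∀ i j, |sigNu i j - sigHat i j| ≤ ν)
    (lam : ℝ) (hlam : 0 < lam)
    (ρbar ρlow : ℝ)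
    (hρbar : ρbar = ⨆ j : {j // j ∈ S}, |βstar j.1|)
    (hρlow : ρlow = ⨅ j : {j // j ∈ S}, |βstar j.1|)
    (sigNuSS : Matrix {j // j ∈ S} {j // j ∈ S} ℝ)
    (hsigNuSS : sigNuSS = sigNu.submatrix (fun i => i.1) (fun j => j.1))
    (sigNuCS : Matrix {j // j ∉ S} {j // j ∈ S} ℝ)
    (hsigNuCS : sigNuCS = sigNu.submatrix (fun i => i.1) (fun j => j.1))
    (sigHatSS : Matrix {j // j ∈ S} {j // j ∈ S} ℝ)
    (hSigHatSS : sigHatSS = sigHat.submatrix (fun i => i.1) (fun j => j.1))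
    (XSe : {j // j ∈ S} → ℝ) (hXSe : XSe = fun j => (Xᵀ.mulVec ε) j.1 / n)
    (XCe : {j // j ∉ S} → ℝ) (hXCe : XCe = fun j => (Xᵀ.mulVec ε) j.1 / n)
    (hpos : sigNuSS.PosDef)
    (hii : matInfNorm (sigNuCS * sigNuSS⁻¹) * (vecInfNorm XSe + S.card * ν * ρbar + lam)
        + S.card * ν * ρbar + vecInfNorm XCe ≤ lam)
    (hiii : matInfNorm sigNuSS⁻¹ * (vecInfNorm XSe + S.card * ν * ρbar + lam) < ρlow)
    (βhS : {j // j ∈ S} → ℝ)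
    (hβhS : βhS = (fun j => βstar j.1) +
      sigNuSS⁻¹.mulVec (XSe - lam • (fun j => Real.sign (βstar j.1))
        - (sigNuSS - sigHatSS).mulVec fun j => βstar j.1))
    (βh : Fin p → ℝ) (hβh : βh = fun j => if h : j ∈ S then βhS ⟨j, h⟩ else 0) :
    (∀ j, Real.sign (βh j) = Real.sign (βstar j)) ∧
    ∃ z : Fin p → ℝ,
      (∀ j ∈ S, z j = Real.sign (βstar j)) ∧
      (∀ j ∉ S, |z j| ≤ 1) ∧
      sigNu.mulVec βh - (n : ℝ)⁻¹ • Xᵀ.mulVec y + lam • z = 0 := by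
  obtain ⟨j₀, hj₀⟩ := Finset.card_pos.mp hScard
  haveI : Nonempty {j // j ∈ S} := ⟨⟨j₀, hj₀⟩⟩
  set w : {j // j ∈ S} → ℝ := fun j => βstar j.1 with hw
  set v : {j // j ∈ S} → ℝ := XSe - lam • (fun j => Real.sign (βstar j.1))
      - (sigNuSS - sigHatSS).mulVec w with hv
  set V : ℝ := vecInfNorm XSe + S.card * ν * ρbar + lam with hV
  have hβhS' : βhS = w + sigNuSS⁻¹.mulVec v := hβhS
  -- basic bounds
  have hρb : ∀ k : {j // j ∈ S}, |βstar k.1| ≤ ρbar := by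
    intro k
    rw [hρbar]
    exact le_ciSup (f := fun j : {j // j ∈ S} => |βstar j.1|)
      (Set.Finite.bddAbove (Set.finite_range _)) k
  have hρl : ∀ k : {j // j ∈ S}, ρlow ≤ |βstar k.1| := by
    intro k
    rw [hρlow]
    exact ciInf_le (f := fun j : {j // j ∈ S} => |βstar j.1|)
      (Set.Finite.bddBelow (Set.finite_range _)) k
  have hρbar0 : 0 ≤ ρbar := le_trans (abs_nonneg _) (hρb ⟨j₀, hj₀⟩)
  have hcb0 : 0 ≤ (S.card : ℝ) * ν * ρbar := by positivity
  -- key entrywise bound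
  have hTV : ∀ a : Fin p, |∑ k : {j // j ∈ S}, (sigNu a k.1 - sigHat a k.1) * βstar k.1|
      ≤ S.card * ν * ρbar := by
    intro a
    calc |∑ k : {j // j ∈ S}, (sigNu a k.1 - sigHat a k.1) * βstar k.1|
        ≤ ∑ k : {j // j ∈ S}, |(sigNu a k.1 - sigHat a k.1) * βstar k.1| :=
          Finset.abs_sum_le_sum_abs _ _
      _ ≤ ∑ _k : {j // j ∈ S}, ν * ρbar := Finset.sum_le_sum fun k _ => by
          rw [abs_mul]
          exact mul_le_mul (hclose a k.1) (hρb k) (abs_nonneg _) hν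
      _ = S.card * ν * ρbar := by
          simp [Finset.sum_const, Fintype.card_coe, nsmul_eq_mul, mul_assoc]
  -- bound on v
  have hvbound : ∀ j : {j // j ∈ S}, |v j| ≤ V := by
    intro j
    have hvj : v j = XSe j - lam * Real.sign (βstar j.1)
        - ∑ k : {j // j ∈ S}, (sigNu j.1 k.1 - sigHat j.1 k.1) * βstar k.1 := by
      simp [hv, Matrix.mulVec, dotProduct, hsigNuSS, hSigHatSS, hw]
    have h1 : |XSe j| ≤ vecInfNorm XSe := abs_le_vecInfNorm' _ _
    have h2 : |lam * Real.sign (βstar j.1)| ≤ lam := by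
      rw [abs_mul, abs_of_pos hlam]
      nlinarith [abs_sign_le' (βstar j.1)]
    have h3 := hTV j.1
    have habs : |v j| ≤ |XSe j| + |lam * Real.sign (βstar j.1)|
        + |∑ k : {j // j ∈ S}, (sigNu j.1 k.1 - sigHat j.1 k.1) * βstar k.1| := by
      rw [hvj]
      simp only [sub_eq_add_neg]
      exact (abs_add_three _ _ _).trans (by simp)
    rw [hV]; linarith
  have hvV : vecInfNorm v ≤ V := ciSup_le hvbound
  have hMinv0 : 0 ≤ matInfNorm sigNuSS⁻¹ := matInfNorm_nonneg' _
  have hsmall : ∀ j : {j // j ∈ S}, |(sigNuSS⁻¹.mulVec v) j| < ρlow := fun j =>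
    lt_of_le_of_lt ((abs_mulVec_le' _ _ _).trans
      (mul_le_mul_of_nonneg_left hvV hMinv0)) hiii
  -- sign recovery
  have hsign : ∀ j, Real.sign (βh j) = Real.sign (βstar j) := by
    intro j
    by_cases h : j ∈ S
    · have hβj : βh j = βstar j + (sigNuSS⁻¹.mulVec v) ⟨j, h⟩ := by
        rw [hβh]
        simp only [dif_pos h, hβhS']
        rfl
      apply sign_eq_of_abs_lt'
      have : |βh j - βstar j| = |(sigNuSS⁻¹.mulVec v) ⟨j, h⟩| := by rw [hβj]; ring_nf
      rw [this]
      exact lt_of_lt_of_le (hsmall ⟨j, h⟩) (hρl ⟨j, h⟩)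
    · have h0 : βstar j = 0 := by
        by_contra hne; exact h ((hS j).mpr hne)
      rw [hβh]; simp [h, h0]
  refine ⟨hsign, ?_⟩
  -- KKT part
  have hdet : IsUnit sigNuSS.det := isUnit_iff_ne_zero.mpr hpos.det_pos.ne'
  have hMM : sigNuSS.mulVec (sigNuSS⁻¹.mulVec v) = v := by
    rw [Matrix.mulVec_mulVec, Matrix.mul_nonsing_inv _ hdet, Matrix.one_mulVec]
  have hsum1 : ∀ a : Fin p, (sigNu.mulVec βh) a = ∑ k : {j // j ∈ S}, sigNu a k.1 * βhS k := by
    intro a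
    have hz : ∀ k ∈ Finset.univ, k ∉ S → sigNu a k * βh k = 0 := by
      intro k _ hk; rw [hβh]; simp [hk]
    calc (sigNu.mulVec βh) a = ∑ k, sigNu a k * βh k := rfl
      _ = ∑ k ∈ S, sigNu a k * βh k := (Finset.sum_subset (Finset.subset_univ S) hz).symm
      _ = ∑ k : {j // j ∈ S}, sigNu a k.1 * βh k.1 := (Finset.sum_coe_sort S _).symm
      _ = ∑ k : {j // j ∈ S}, sigNu a k.1 * βhS k := Finset.sum_congr rfl fun k _ => by
          rw [hβh]; simp [k.2]
  have hXty : ∀ a : Fin p, ((n : ℝ)⁻¹ • Xᵀ.mulVec y) a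
      = (∑ k : {j // j ∈ S}, sigHat a k.1 * βstar k.1) + (Xᵀ.mulVec ε) a / n := by
    intro a
    have hz : ∀ k ∈ Finset.univ, k ∉ S → sigHat a k * βstar k = 0 := by
      intro k _ hk
      have h0 : βstar k = 0 := by by_contra hne; exact hk ((hS k).mpr hne)
      simp [h0]
    have hrestr : (sigHat.mulVec βstar) a = ∑ k : {j // j ∈ S}, sigHat a k.1 * βstar k.1 := by
      calc (sigHat.mulVec βstar) a = ∑ k, sigHat a k * βstar k := rfl
        _ = ∑ k ∈ S, sigHat a k * βstar k := (Finset.sum_subset (Finset.subset_univ S) hz).symm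
        _ = ∑ k : {j // j ∈ S}, sigHat a k.1 * βstar k.1 := (Finset.sum_coe_sort S _).symm
    have hexp : ((n : ℝ)⁻¹ • Xᵀ.mulVec y) a = (sigHat.mulVec βstar) a + (Xᵀ.mulVec ε) a / n := by
      rw [hy, Matrix.mulVec_add, Matrix.mulVec_mulVec, hSigHat, Matrix.smul_mulVec]
      simp [Pi.smul_apply, smul_eq_mul]
      ring
    rw [hexp, hrestr]
  set r : Fin p → ℝ := fun a => (sigNu.mulVec βh) a - ((n : ℝ)⁻¹ • Xᵀ.mulVec y) a with hr
  -- r on S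
  have hrS : ∀ (j : Fin p) (h : j ∈ S), r j = -lam * Real.sign (βstar j) := by
    intro j h
    have hA : ∑ k : {j // j ∈ S}, sigNu j k.1 * βhS k
        = (sigNuSS.mulVec w) ⟨j, h⟩ + v ⟨j, h⟩ := by
      have h1 : ∑ k : {j // j ∈ S}, sigNu j k.1 * βhS k = (sigNuSS.mulVec βhS) ⟨j, h⟩ := by
        simp [Matrix.mulVec, dotProduct, hsigNuSS]
      rw [h1, hβhS', Matrix.mulVec_add, hMM]
      rfl
    have hB : ∑ k : {j // j ∈ S}, sigHat j k.1 * βstar k.1 = (sigHatSS.mulVec w) ⟨j, h⟩ := by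
      simp [Matrix.mulVec, dotProduct, hSigHatSS, hw]
    have hvj : v ⟨j, h⟩ = XSe ⟨j, h⟩ - lam * Real.sign (βstar j)
        - ((sigNuSS.mulVec w) ⟨j, h⟩ - (sigHatSS.mulVec w) ⟨j, h⟩) := by
      simp [hv, Matrix.sub_mulVec]
    have hXe : XSe ⟨j, h⟩ = (Xᵀ.mulVec ε) j / n := by rw [hXSe]
    rw [hr]
    simp only
    rw [hsum1 j, hXty j, hA, hB, hvj, hXe]
    ring
  -- r off S
  have hrC : ∀ (j : Fin p) (h : j ∉ S), |r j| ≤ lam := by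
    intro j h
    have hA : ∑ k : {j // j ∈ S}, sigNu j k.1 * βhS k
        = ((sigNuCS * sigNuSS⁻¹).mulVec v) ⟨j, h⟩
          + ∑ k : {j // j ∈ S}, sigNu j k.1 * βstar k.1 := by
      have h1 : ∑ k : {j // j ∈ S}, sigNu j k.1 * βhS k = (sigNuCS.mulVec βhS) ⟨j, h⟩ := by
        simp [Matrix.mulVec, dotProduct, hsigNuCS]
      have h2 : (sigNuCS.mulVec w) ⟨j, h⟩ = ∑ k : {j // j ∈ S}, sigNu j k.1 * βstar k.1 := by
        simp [Matrix.mulVec, dotProduct, hsigNuCS, hw]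
      rw [h1, hβhS', Matrix.mulVec_add, Matrix.mulVec_mulVec]
      rw [Pi.add_apply, h2]
      ring
    have hrj : r j = ((sigNuCS * sigNuSS⁻¹).mulVec v) ⟨j, h⟩
        + (∑ k : {j // j ∈ S}, (sigNu j k.1 - sigHat j k.1) * βstar k.1) - XCe ⟨j, h⟩ := by
      have hXe : XCe ⟨j, h⟩ = (Xᵀ.mulVec ε) j / n := by rw [hXCe]
      rw [hr]
      simp only
      rw [hsum1 j, hXty j, hA, hXe]
      simp only [sub_mul, Finset.sum_sub_distrib]
      ring
    have h1 : |((sigNuCS * sigNuSS⁻¹).mulVec v) ⟨j, h⟩|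
        ≤ matInfNorm (sigNuCS * sigNuSS⁻¹) * V :=
      (abs_mulVec_le' _ _ _).trans (mul_le_mul_of_nonneg_left hvV (matInfNorm_nonneg' _))
    have h2 := hTV j
    have h3 : |XCe ⟨j, h⟩| ≤ vecInfNorm XCe := abs_le_vecInfNorm' _ _
    have habs : |r j| ≤ |((sigNuCS * sigNuSS⁻¹).mulVec v) ⟨j, h⟩|
        + |∑ k : {j // j ∈ S}, (sigNu j k.1 - sigHat j k.1) * βstar k.1| + |XCe ⟨j, h⟩| := by
      rw [hrj]
      simp only [sub_eq_add_neg]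
      exact (abs_add_three _ _ _).trans (by simp)
    linarith
  refine ⟨fun j => if h : j ∈ S then Real.sign (βstar j) else -r j / lam, ?_, ?_, ?_⟩
  · intro j h; simp [h]
  · intro j h
    simp only [dif_neg h]
    rw [abs_div, abs_neg, abs_of_pos hlam, div_le_one hlam]
    exact hrC j h
  · funext j
    by_cases h : j ∈ S
    · simp only [Pi.add_apply, Pi.sub_apply, Pi.smul_apply, smul_eq_mul, dif_pos h, Pi.zero_apply]
      have h1 : r j = -lam * Real.sign (βstar j) := hrS j h
      have h2 : r j = (sigNu.mulVec βh) j - (n : ℝ)⁻¹ * (Xᵀ.mulVec y) j := rfl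
      rw [← h2, h1]
      ring
    · simp only [Pi.add_apply, Pi.sub_apply, Pi.smul_apply, smul_eq_mul, dif_neg h, Pi.zero_apply]
      have h2 : r j = (sigNu.mulVec βh) j - (n : ℝ)⁻¹ * (Xᵀ.mulVec y) j := rfl
      rw [← h2]
      field_simp
      ring
end

section
/- Let Σ̂^ν be a symmetric p×p real matrix, let r ∈ R^p, and let λ > 0. Define L(β) = βᵀ Σ̂^ν β − 2 βᵀ r + 2λ‖β‖₁ for β ∈ R^p. Suppose β̂ ∈ R^p satisfies: (i) for every j with β̂_j ≠ 0, (r − Σ̂^ν β̂)_j = λ·sgn(β̂_j); (ii) for every j with β̂_j = 0, |(r − Σ̂^ν β̂)_j| < λ; and (iii) the principal submatrix of Σ̂^ν indexed by the active set A = {j : β̂_j ≠ 0} is positive definite. Then β̂ is a local minimizer of L. -/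
open Matrix

private lemma ctl_bilin_bound {p : ℕ} (A : Matrix (Fin p) (Fin p) ℝ) (x y : Fin p → ℝ) :
    |x ⬝ᵥ A.mulVec y| ≤ (∑ i, ∑ j, |A i j|) * (‖x‖ * ‖y‖) := by
  calc |x ⬝ᵥ A.mulVec y| = |∑ i, ∑ j, x i * (A i j * y j)| := by
        simp [dotProduct, mulVec, Finset.mul_sum]
    _ ≤ ∑ i, |∑ j, x i * (A i j * y j)| := Finset.abs_sum_le_sum_abs _ _
    _ ≤ ∑ i, ∑ j, |x i * (A i j * y j)| :=
        Finset.sum_le_sum fun i _ => Finset.abs_sum_le_sum_abs _ _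
    _ ≤ ∑ i, ∑ j, |A i j| * (‖x‖ * ‖y‖) := by
        refine Finset.sum_le_sum fun i _ => Finset.sum_le_sum fun j _ => ?_
        have hx : |x i| ≤ ‖x‖ := by
          simpa [Real.norm_eq_abs] using norm_le_pi_norm x i
        have hy : |y j| ≤ ‖y‖ := by
          simpa [Real.norm_eq_abs] using norm_le_pi_norm y j
        have : |x i * (A i j * y j)| = |A i j| * (|x i| * |y j|) := by
          rw [abs_mul, abs_mul]; ring
        rw [this]
        have h1 : |x i| * |y j| ≤ ‖x‖ * ‖y‖ :=
          mul_le_mul hx hy (abs_nonneg _) (norm_nonneg _)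
        exact mul_le_mul_of_nonneg_left h1 (abs_nonneg _)
    _ = (∑ i, ∑ j, |A i j|) * (‖x‖ * ‖y‖) := by
        rw [Finset.sum_mul]
        exact Finset.sum_congr rfl fun i _ => (Finset.sum_mul _ _ _).symm

private lemma ctl_posdef_on_support {p : ℕ} (A : Matrix (Fin p) (Fin p) ℝ) (P : Fin p → Prop)
    (h3 : ∀ v : Fin p → ℝ, v ≠ 0 → (∀ j, P j → v j = 0) → 0 < v ⬝ᵥ A.mulVec v) :
    ∃ c > 0, ∀ u : Fin p → ℝ, (∀ j, P j → u j = 0) → c * ‖u‖ ^ 2 ≤ u ⬝ᵥ A.mulVec u := by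
  classical
  have hcont : Continuous fun u : Fin p → ℝ => u ⬝ᵥ A.mulVec u := by
    simp only [dotProduct, mulVec]
    exact continuous_finset_sum _ fun i _ =>
      (continuous_apply i).mul (continuous_finset_sum _ fun j _ =>
        (continuous_const.mul (continuous_apply j)))
  have hscale : ∀ (t : ℝ) (x : Fin p → ℝ),
      (t • x) ⬝ᵥ A.mulVec (t • x) = t ^ 2 * (x ⬝ᵥ A.mulVec x) := by
    intro t x
    rw [Matrix.mulVec_smul, dotProduct_smul, smul_dotProduct, smul_eq_mul, smul_eq_mul]; ring
  set S : Set (Fin p → ℝ) := {u | ‖u‖ = 1 ∧ ∀ j, P j → u j = 0} with hSdef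
  by_cases hS : S.Nonempty
  · have hclosed : IsClosed {u : Fin p → ℝ | ∀ j, P j → u j = 0} := by
      have hrw : {u : Fin p → ℝ | ∀ j, P j → u j = 0} = ⋂ j, {u | P j → u j = 0} := by
        ext u; simp
      rw [hrw]
      refine isClosed_iInter fun j => ?_
      by_cases hPj : P j
      · have hset : {u : Fin p → ℝ | P j → u j = 0} = {u | u j = 0} := by ext u; simp [hPj]
        rw [hset]; exact isClosed_eq (continuous_apply j) continuous_const
      · have hset : {u : Fin p → ℝ | P j → u j = 0} = Set.univ := by ext u; simp [hPj]
        rw [hset]; exact isClosed_univ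
    have hcomp : IsCompact S := by
      have hrw : S = Metric.sphere (0 : Fin p → ℝ) 1 ∩ {u | ∀ j, P j → u j = 0} := by
        ext u
        simp [hSdef, Set.mem_inter_iff, mem_sphere_zero_iff_norm, and_comm]
      rw [hrw]
      exact (isCompact_sphere 0 1).inter_right hclosed
    obtain ⟨u₀, hu₀, hmin⟩ := hcomp.exists_isMinOn hS hcont.continuousOn
    have hu₀ne : u₀ ≠ 0 := by
      intro h
      rw [h] at hu₀
      simp [hSdef] at hu₀
    have hc0 : 0 < u₀ ⬝ᵥ A.mulVec u₀ := h3 u₀ hu₀ne hu₀.2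
    refine ⟨_, hc0, fun u hu => ?_⟩
    rcases eq_or_ne u 0 with rfl | hune
    · simp
    · have ht : 0 < ‖u‖ := norm_pos_iff.mpr hune
      set x := ‖u‖⁻¹ • u with hx
      have hxnorm : ‖x‖ = 1 := by
        rw [hx, norm_smul, Real.norm_eq_abs, abs_of_pos (inv_pos.mpr ht),
          inv_mul_cancel₀ ht.ne']
      have hxS : x ∈ S := ⟨hxnorm, fun j hj => by simp [hx, hu j hj]⟩
      have hle : u₀ ⬝ᵥ A.mulVec u₀ ≤ x ⬝ᵥ A.mulVec x := hmin hxS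
      have hxq : x ⬝ᵥ A.mulVec x = ‖u‖⁻¹ ^ 2 * (u ⬝ᵥ A.mulVec u) := by
        rw [hx, hscale]
      have h2 : u₀ ⬝ᵥ A.mulVec u₀ ≤ ‖u‖⁻¹ ^ 2 * (u ⬝ᵥ A.mulVec u) := hle.trans_eq hxq
      calc (u₀ ⬝ᵥ A.mulVec u₀) * ‖u‖ ^ 2
          ≤ (‖u‖⁻¹ ^ 2 * (u ⬝ᵥ A.mulVec u)) * ‖u‖ ^ 2 :=
            mul_le_mul_of_nonneg_right h2 (sq_nonneg _)
        _ = u ⬝ᵥ A.mulVec u := by field_simp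
  · refine ⟨1, one_pos, fun u hu => ?_⟩
    have hu0 : u = 0 := by
      by_contra hune
      have ht : 0 < ‖u‖ := norm_pos_iff.mpr hune
      refine hS ⟨‖u‖⁻¹ • u, ?_, fun j hj => by simp [hu j hj]⟩
      rw [norm_smul, Real.norm_eq_abs, abs_of_pos (inv_pos.mpr ht), inv_mul_cancel₀ ht.ne']
    simp [hu0]
/-- Second-order sufficiency for a local minimum of the (possibly nonconvex)
covariance-thresholded lasso objective
`L(β) = βᵀ Σ̂^ν β − 2 βᵀ r + 2λ‖β‖₁`:
if `β̂` satisfies the KKT conditions with strict dual feasibility on the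
inactive set, and the quadratic form of `Σ̂^ν` is positive definite on vectors
supported on the active set `{j : β̂_j ≠ 0}`, then `β̂` is a local minimizer. -/
theorem ctLasso_kkt_isLocalMin {p : ℕ}
    (Sν : Matrix (Fin p) (Fin p) ℝ) (hSym : Sν.IsSymm)
    (r : Fin p → ℝ) (lam : ℝ) (hlam : 0 < lam)
    (L : (Fin p → ℝ) → ℝ)
    (hL : L = fun β => β ⬝ᵥ Sν.mulVec β - 2 * (β ⬝ᵥ r) + 2 * lam * ∑ j, |β j|)
    (βh : Fin p → ℝ)
    (h1 : ∀ j, βh j ≠ 0 → (r - Sν.mulVec βh) j = lam * Real.sign (βh j))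
    (h2 : ∀ j, βh j = 0 → |(r - Sν.mulVec βh) j| < lam)
    (h3 : ∀ v : Fin p → ℝ, v ≠ 0 → (∀ j, βh j = 0 → v j = 0) →
      0 < v ⬝ᵥ Sν.mulVec v) :
    IsLocalMin L βh := by
  classical
  -- symmetry of the quadratic form
  have hsd : ∀ x y : Fin p → ℝ, x ⬝ᵥ Sν.mulVec y = y ⬝ᵥ Sν.mulVec x := by
    intro x y
    simp only [dotProduct, mulVec, Finset.mul_sum]
    rw [Finset.sum_comm]
    refine Finset.sum_congr rfl fun i _ => Finset.sum_congr rfl fun j _ => ?_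
    rw [hSym.apply i j]
    ring
  -- expansion of L around βh
  have hexp : ∀ w : Fin p → ℝ,
      L (βh + w) = L βh + (w ⬝ᵥ Sν.mulVec w
        + ∑ j, (2 * lam * (|βh j + w j| - |βh j|) - 2 * (r - Sν.mulVec βh) j * w j)) := by
    intro w
    have hdg : ∑ j, (2 * lam * (|βh j + w j| - |βh j|) - 2 * (r - Sν.mulVec βh) j * w j)
        = 2 * lam * (∑ j, |βh j + w j|) - 2 * lam * (∑ j, |βh j|)
          - 2 * (∑ j, r j * w j) + 2 * (∑ j, Sν.mulVec βh j * w j) := by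
      rw [Finset.mul_sum, Finset.mul_sum, Finset.mul_sum, Finset.mul_sum,
        ← Finset.sum_sub_distrib, ← Finset.sum_sub_distrib, ← Finset.sum_add_distrib]
      refine Finset.sum_congr rfl fun j _ => ?_
      simp only [Pi.sub_apply]
      ring
    have hq : (βh + w) ⬝ᵥ Sν.mulVec (βh + w)
        = βh ⬝ᵥ Sν.mulVec βh + 2 * (w ⬝ᵥ Sν.mulVec βh) + w ⬝ᵥ Sν.mulVec w := by
      rw [Matrix.mulVec_add, dotProduct_add, add_dotProduct, add_dotProduct, hsd βh w]
      ring
    have hr : (βh + w) ⬝ᵥ r = βh ⬝ᵥ r + w ⬝ᵥ r := add_dotProduct _ _ _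
    have hwr : w ⬝ᵥ r = ∑ j, r j * w j := by
      simp [dotProduct, mul_comm]
    have hws : w ⬝ᵥ Sν.mulVec βh = ∑ j, Sν.mulVec βh j * w j := by
      simp [dotProduct, mul_comm]
    simp only [hL, Pi.add_apply]
    rw [hq, hr, hdg, ← hwr, ← hws]
    ring
  -- constants
  obtain ⟨c, hc, hcq⟩ := ctl_posdef_on_support Sν (fun j => βh j = 0) h3
  obtain ⟨ε, hε, hεg⟩ : ∃ ε > 0, ∀ j, βh j = 0 → |(r - Sν.mulVec βh) j| ≤ lam - ε := by
    by_cases hB : (Finset.univ.filter fun j => βh j = 0).Nonempty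
    · refine ⟨(Finset.univ.filter fun j => βh j = 0).inf' hB
        (fun j => lam - |(r - Sν.mulVec βh) j|), ?_, ?_⟩
      · refine (Finset.lt_inf'_iff hB).mpr fun j hj => ?_
        have := h2 j (Finset.mem_filter.mp hj).2
        linarith
      · intro j hj
        have hmem : j ∈ Finset.univ.filter fun j => βh j = 0 := by simp [hj]
        have := Finset.inf'_le (fun j => lam - |(r - Sν.mulVec βh) j|) hmem
        linarith
    · exact ⟨lam, hlam, fun j hj => (hB ⟨j, by simp [hj]⟩).elim⟩
  obtain ⟨m, hm, hmβ⟩ : ∃ m > 0, ∀ j, βh j ≠ 0 → m ≤ |βh j| := by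
    by_cases hB : (Finset.univ.filter fun j => βh j ≠ 0).Nonempty
    · refine ⟨(Finset.univ.filter fun j => βh j ≠ 0).inf' hB (fun j => |βh j|), ?_, ?_⟩
      · exact (Finset.lt_inf'_iff hB).mpr fun j hj =>
          abs_pos.mpr (Finset.mem_filter.mp hj).2
      · intro j hj
        have hmem : j ∈ Finset.univ.filter fun j => βh j ≠ 0 := by simp [hj]
        exact Finset.inf'_le _ hmem
    · exact ⟨1, one_pos, fun j hj => (hB ⟨j, by simp [hj]⟩).elim⟩
  set M : ℝ := (∑ i, ∑ j, |Sν i j|) + 1 with hMdef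
  have hM : 0 < M := by
    have : (0:ℝ) ≤ ∑ i, ∑ j, |Sν i j| :=
      Finset.sum_nonneg fun i _ => Finset.sum_nonneg fun j _ => abs_nonneg _
    linarith
  have hbil : ∀ x y : Fin p → ℝ, |x ⬝ᵥ Sν.mulVec y| ≤ M * (‖x‖ * ‖y‖) := by
    intro x y
    refine (ctl_bilin_bound Sν x y).trans ?_
    have : (0:ℝ) ≤ ‖x‖ * ‖y‖ := mul_nonneg (norm_nonneg _) (norm_nonneg _)
    nlinarith
  set δ : ℝ := min (m / 2) (ε / (2 * M)) with hδdef
  have hδ : 0 < δ := lt_min (by linarith) (div_pos hε (by linarith))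
  have hδm : δ ≤ m / 2 := min_le_left _ _
  have hMδ : M * δ ≤ ε / 2 := by
    have h' : δ ≤ ε / (2 * M) := min_le_right _ _
    have := mul_le_mul_of_nonneg_left h' hM.le
    calc M * δ ≤ M * (ε / (2 * M)) := this
      _ = ε / 2 := by field_simp
  clear_value M δ
  -- the local-min property
  have key : ∀ᶠ β in nhds βh, L βh ≤ L β := by
    rw [Metric.eventually_nhds_iff]
    refine ⟨δ, hδ, fun β hβ => ?_⟩
    set v : Fin p → ℝ := β - βh with hv
    have hβv : β = βh + v := by rw [hv]; abel
    have hnv : ‖v‖ < δ := by rwa [hv, ← dist_eq_norm]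
    set u : Fin p → ℝ := fun j => if βh j = 0 then 0 else v j with hu
    set w : Fin p → ℝ := fun j => if βh j = 0 then v j else 0 with hw
    have hvuw : v = u + w := by
      funext j
      by_cases hj : βh j = 0 <;> simp [hu, hw, hj]
    clear_value v u w
    have hvj : ∀ j, |v j| ≤ ‖v‖ := fun j => by
      simpa [Real.norm_eq_abs] using norm_le_pi_norm v j
    have hunorm : ‖u‖ ≤ ‖v‖ := by
      rw [pi_norm_le_iff_of_nonneg (norm_nonneg v)]
      intro j
      rw [Real.norm_eq_abs]
      by_cases hj : βh j = 0
      · simp [hu, hj, norm_nonneg]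
      · simpa [hu, hj] using hvj j
    have hwnorm : ‖w‖ ≤ ‖v‖ := by
      rw [pi_norm_le_iff_of_nonneg (norm_nonneg v)]
      intro j
      rw [Real.norm_eq_abs]
      by_cases hj : βh j = 0
      · simpa [hw, hj] using hvj j
      · simp [hw, hj, norm_nonneg]
    have hwsum : ‖w‖ ≤ ∑ j, |w j| := by
      rw [pi_norm_le_iff_of_nonneg (Finset.sum_nonneg fun j _ => abs_nonneg _)]
      intro j
      rw [Real.norm_eq_abs]
      exact Finset.single_le_sum (fun k _ => abs_nonneg (w k)) (Finset.mem_univ j)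
    -- per-coordinate bound on the first-order + penalty part
    have hTj : ∀ j, (if βh j = 0 then 2 * ε * |v j| else 0)
        ≤ 2 * lam * (|βh j + v j| - |βh j|) - 2 * (r - Sν.mulVec βh) j * v j := by
      intro j
      by_cases hj : βh j = 0
      · rw [if_pos hj, hj]
        have hg := hεg j hj
        have habs : (r - Sν.mulVec βh) j * v j ≤ |(r - Sν.mulVec βh) j| * |v j| := by
          calc (r - Sν.mulVec βh) j * v j ≤ |(r - Sν.mulVec βh) j * v j| := le_abs_self _
            _ = |(r - Sν.mulVec βh) j| * |v j| := abs_mul _ _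
        simp only [zero_add, abs_zero, sub_zero]
        nlinarith [abs_nonneg (v j)]
      · rw [if_neg hj]
        have hlt : |v j| < |βh j| := by
          have h1' : |v j| < δ := lt_of_le_of_lt (hvj j) hnv
          have h2' : m ≤ |βh j| := hmβ j hj
          linarith
        have hsgn : |βh j + v j| - |βh j| = Real.sign (βh j) * v j := by
          rcases lt_or_gt_of_ne hj with hneg | hpos
          · have hb : |βh j| = -βh j := abs_of_neg hneg
            have hvb : βh j + v j < 0 := by
              have h2' := (abs_lt.mp hlt).2
              rw [hb] at h2'
              linarith
            rw [abs_of_neg hvb, hb, Real.sign_of_neg hneg]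
            ring
          · have hb : |βh j| = βh j := abs_of_pos hpos
            have hvb : 0 < βh j + v j := by
              have h2' := (abs_lt.mp hlt).1
              rw [hb] at h2'
              linarith
            rw [abs_of_pos hvb, hb, Real.sign_of_pos hpos]
            ring
        rw [hsgn, h1 j hj]
        have hzero : 2 * lam * (Real.sign (βh j) * v j)
            - 2 * (lam * Real.sign (βh j)) * v j = 0 := by ring
        linarith
    have hTsum : 2 * ε * ∑ j, |w j|
        ≤ ∑ j, (2 * lam * (|βh j + v j| - |βh j|) - 2 * (r - Sν.mulVec βh) j * v j) := by
      have h1' : ∑ j, (if βh j = 0 then 2 * ε * |v j| else 0) = 2 * ε * ∑ j, |w j| := by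
        rw [Finset.mul_sum]
        refine Finset.sum_congr rfl fun j _ => ?_
        by_cases hj : βh j = 0 <;> simp [hw, hj]
      rw [← h1']
      exact Finset.sum_le_sum fun j _ => hTj j
    have husupp : ∀ j, βh j = 0 → u j = 0 := fun j hj => by simp [hu, hj]
    have hQu : c * ‖u‖ ^ 2 ≤ u ⬝ᵥ Sν.mulVec u := hcq u husupp
    have hquad : c * ‖u‖ ^ 2 - M * (‖u‖ * ‖w‖) - M * (‖w‖ * ‖u‖) - M * (‖w‖ * ‖w‖)
        ≤ v ⬝ᵥ Sν.mulVec v := by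
      have hexp2 : v ⬝ᵥ Sν.mulVec v = u ⬝ᵥ Sν.mulVec u + u ⬝ᵥ Sν.mulVec w
          + w ⬝ᵥ Sν.mulVec u + w ⬝ᵥ Sν.mulVec w := by
        rw [hvuw, Matrix.mulVec_add, dotProduct_add, add_dotProduct, add_dotProduct]
        ring
      have b1 := neg_abs_le (u ⬝ᵥ Sν.mulVec w)
      have b2 := neg_abs_le (w ⬝ᵥ Sν.mulVec u)
      have b3 := neg_abs_le (w ⬝ᵥ Sν.mulVec w)
      have a1 := hbil u w
      have a2 := hbil w u
      have a3 := hbil w w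
      rw [hexp2]
      linarith
    rw [hβv, hexp v]
    have hnu : ‖u‖ < δ := lt_of_le_of_lt hunorm hnv
    have hnw : ‖w‖ < δ := lt_of_le_of_lt hwnorm hnv
    have hεw : 2 * ε * ‖w‖ ≤ 2 * ε * ∑ j, |w j| :=
      mul_le_mul_of_nonneg_left hwsum (by linarith)
    have hsq : 0 ≤ c * ‖u‖ ^ 2 := mul_nonneg hc.le (sq_nonneg _)
    have hMu : M * ‖u‖ ≤ ε / 2 :=
      le_trans (mul_le_mul_of_nonneg_left hnu.le hM.le) hMδ
    have hMw : M * ‖w‖ ≤ ε / 2 :=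
      le_trans (mul_le_mul_of_nonneg_left hnw.le hM.le) hMδ
    have hb1 : M * (‖u‖ * ‖w‖) ≤ ε / 2 * ‖w‖ := by
      rw [← mul_assoc]
      exact mul_le_mul_of_nonneg_right hMu (norm_nonneg _)
    have hb2 : M * (‖w‖ * ‖u‖) ≤ ε / 2 * ‖u‖ := by
      rw [← mul_assoc]
      exact mul_le_mul_of_nonneg_right hMw (norm_nonneg _)
    have hb2' : ε / 2 * ‖u‖ ≤ ε / 2 * δ := mul_le_mul_of_nonneg_left hnu.le (by linarith)
    have hb1' : M * (‖u‖ * ‖w‖) ≤ ε / 2 * ‖w‖ := hb1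
    have hb3 : M * (‖w‖ * ‖w‖) ≤ ε / 2 * ‖w‖ := by
      rw [← mul_assoc]
      exact mul_le_mul_of_nonneg_right hMw (norm_nonneg _)
    have hwn : 0 ≤ ‖w‖ := norm_nonneg _
    have hun : 0 ≤ ‖u‖ := norm_nonneg _
    have hb2'' : M * (‖w‖ * ‖u‖) ≤ ε / 2 * ‖w‖ := by
      rw [mul_comm ‖w‖ ‖u‖]
      exact hb1
    have hεwn : 0 ≤ ε * ‖w‖ := mul_nonneg hε.le hwn
    have hS2 : 2 * ε * ‖w‖
        ≤ ∑ j, (2 * lam * (|βh j + v j| - |βh j|) - 2 * (r - Sν.mulVec βh) j * v j) :=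
      le_trans hεw hTsum
    have hfin : 0 ≤ v ⬝ᵥ Sν.mulVec v
        + ∑ j, (2 * lam * (|βh j + v j| - |βh j|) - 2 * (r - Sν.mulVec βh) j * v j) := by
      linarith [hquad, hS2, hb1, hb2'', hb3, hsq, hεwn]
    linarith [hfin]
  exact key
end

section
/- Fix ν ≥ 0 and γ ≥ 0, and define the adaptive-thresholding operator s_ν(x) = sgn(x)·(|x| − ν^{γ+1}|x|^{−γ})⁺ for x ≠ 0 and s_ν(0) = 0, where (t)⁺ = max(t, 0). Then s_ν satisfies all three covariance-thresholding properties: s_ν(x) = 0 whenever |x| ≤ ν; |s_ν(x)| ≤ |x| for all x; and |s_ν(x) − x| ≤ ν for all x. -/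
/-- Adaptive-thresholding operator:
`s_ν(x) = sgn(x)·(|x| − ν^{γ+1}|x|^{−γ})⁺` for `x ≠ 0`, and `s_ν(0) = 0`.
Here the powers are real powers (`Real.rpow`). -/
noncomputable def adaptiveThreshold (ν γ x : ℝ) : ℝ :=
  if x = 0 then 0 else Real.sign x * max (|x| - ν ^ (γ + 1) * |x| ^ (-γ)) 0

/-- The adaptive-thresholding operator (with `ν ≥ 0`, `γ ≥ 0`) satisfies the
three covariance-thresholding properties: it vanishes for `|x| ≤ ν`, shrinks
in absolute value, and moves each point by at most `ν`. -/
theorem adaptiveThreshold_is_covariance_thresholding (ν γ : ℝ) (hν : 0 ≤ ν) (hγ : 0 ≤ γ) :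
    (∀ x : ℝ, |x| ≤ ν → adaptiveThreshold ν γ x = 0) ∧
    (∀ x : ℝ, |adaptiveThreshold ν γ x| ≤ |x|) ∧
    (∀ x : ℝ, |adaptiveThreshold ν γ x - x| ≤ ν) := by
  have habs : ∀ x : ℝ, x ≠ 0 → |Real.sign x| = 1 := by
    intro x hx
    rcases lt_trichotomy x 0 with h | h | h
    · rw [Real.sign_of_neg h]; norm_num
    · exact absurd h hx
    · rw [Real.sign_of_pos h]; norm_num
  have h1 : ∀ x : ℝ, |x| ≤ ν → adaptiveThreshold ν γ x = 0 := by
    intro x hx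
    unfold adaptiveThreshold
    split_ifs with h
    · rfl
    · have hx0 : 0 < |x| := abs_pos.mpr h
      have hpow : |x| ^ (γ + 1) ≤ ν ^ (γ + 1) :=
        Real.rpow_le_rpow hx0.le hx (by linarith)
      have hinv : (0:ℝ) ≤ |x| ^ (-γ) := Real.rpow_nonneg (abs_nonneg x) _
      have hsplit : |x| = |x| ^ (γ + 1) * |x| ^ (-γ) := by
        rw [← Real.rpow_add hx0, show γ + 1 + (-γ) = 1 by ring, Real.rpow_one]
      have hle : |x| - ν ^ (γ + 1) * |x| ^ (-γ) ≤ 0 := by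
        nlinarith [mul_le_mul_of_nonneg_right hpow hinv]
      rw [max_eq_right hle, mul_zero]
  refine ⟨h1, ?_, ?_⟩
  · intro x
    unfold adaptiveThreshold
    split_ifs with h
    · simp
    · have hm0 : (0:ℝ) ≤ max (|x| - ν ^ (γ + 1) * |x| ^ (-γ)) 0 := le_max_right _ _
      rw [abs_mul, habs x h, one_mul, abs_of_nonneg hm0]
      refine max_le ?_ (abs_nonneg x)
      have : (0:ℝ) ≤ ν ^ (γ + 1) * |x| ^ (-γ) :=
        mul_nonneg (Real.rpow_nonneg hν _) (Real.rpow_nonneg (abs_nonneg x) _)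
      linarith
  · intro x
    by_cases h : x = 0
    · simp [adaptiveThreshold, h, hν]
    · rcases le_or_gt |x| ν with hle | hlt
      · rw [h1 x hle]
        simpa using hle
      · have hx0 : 0 < |x| := abs_pos.mpr h
        have hνx : ν ^ (γ + 1) * |x| ^ (-γ) ≤ ν := by
          rcases eq_or_lt_of_le hν with hν0 | hν0
          · rw [← hν0, Real.zero_rpow (by linarith : γ + 1 ≠ 0), zero_mul]
          · have hxγ : (0:ℝ) < |x| ^ γ := Real.rpow_pos_of_pos hx0 γ
            have hνγ : ν ^ γ ≤ |x| ^ γ :=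
              Real.rpow_le_rpow hν hlt.le hγ
            have hrw : ν ^ (γ + 1) = ν * ν ^ γ := by
              rw [Real.rpow_add hν0, Real.rpow_one]; ring
            have hinv : |x| ^ (-γ) = (|x| ^ γ)⁻¹ := Real.rpow_neg (abs_nonneg x) γ
            rw [hrw, hinv]
            rw [mul_assoc]
            have hle1 : ν ^ γ * (|x| ^ γ)⁻¹ ≤ 1 := by
              rw [mul_inv_le_iff₀ hxγ, one_mul]; exact hνγ
            nlinarith
        set t := ν ^ (γ + 1) * |x| ^ (-γ) with ht
        have ht0 : 0 ≤ t := mul_nonneg (Real.rpow_nonneg hν _) (Real.rpow_nonneg (abs_nonneg x) _)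
        set m := max (|x| - t) 0 with hm
        have hm1 : |x| - t ≤ m := le_max_left _ _
        have hm2 : m ≤ |x| := max_le (by linarith) hx0.le
        have hxs : Real.sign x * |x| = x := by
          rcases lt_trichotomy x 0 with hx | hx | hx
          · rw [Real.sign_of_neg hx, abs_of_neg hx]; ring
          · exact absurd hx h
          · rw [Real.sign_of_pos hx, abs_of_pos hx]; ring
        have : adaptiveThreshold ν γ x - x = Real.sign x * (m - |x|) := by
          unfold adaptiveThreshold
          rw [if_neg h, ← ht, ← hm]
          linear_combination hxs
        rw [this, abs_mul, habs x h, one_mul, abs_of_nonpos (by linarith)]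
        linarith
end
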